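/- Let W and A be measurable spaces, μ̄ a probability measure on W, μ_n := μ̄^{⊗n}, and for each m let μ_m := μ̄^{⊗m}. Let F = (F_m : W^m → A)_m be a family of measurable queries and 𝒯_λ Poisson sampling with rate λ ∈ [0,1]. Then for every ε > 0, every index j and all v, w ∈ W: Δ_ε( Σ_τ 𝒯_λ(τ)·(F∘SAMP_τ)_* (μ_n)_{j,v} , Σ_τ 𝒯_λ(τ)·(F∘SAMP_τ)_* (μ_n)_{j,w} ) ≤ Σ_{m=1}^{n} C(n,m)·λ^m·(1−λ)^{n−m}·(m/n)·Φ_{μ_m,F_m}( log(1 + (n/m)·(e^ε − 1)) ). -/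
import Mathlib


open MeasureTheory Real
open scoped ENNReal

noncomputable section

/-- Hockey-stick divergence / privacy curve `Δ_ε(μ,ν)`. -/
def hsDiv {A : Type*} [MeasurableSpace A] (ε : ℝ) (μ ν : Measure A) : ℝ :=
  ⨆ S : {S : Set A // MeasurableSet S}, ((μ S.1).toReal - Real.exp ε * (ν S.1).toReal)

/-- Subsampling map induced by a template. -/
def SAMP {W : Type*} {n m : ℕ} (τ : Fin m → Fin n) (x : Fin n → W) : Fin m → W :=
  fun i => x (τ i)

/-- Product measure with `j`-th factor replaced by the Dirac measure at `v`. -/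
def fixEntry {W : Type*} [MeasurableSpace W] {n : ℕ} (μbar : Fin n → Measure W)
    (j : Fin n) (v : W) : Measure (Fin n → W) :=
  Measure.pi (Function.update μbar j (Measure.dirac v))

open Classical in
/-- Sampling privacy curve `SPC^j` : conditional expectation over templates containing `j`. -/
def SPCj {W A : Type*} [MeasurableSpace W] [MeasurableSpace A] {n m : ℕ}
    (F : (Fin m → W) → A) (μbar : Fin n → Measure W)
    (𝒯 : (Fin m → Fin n) → ℝ≥0∞) (j : Fin n) (ε : ℝ) : ℝ :=
  (∑ τ : Fin m → Fin n, if j ∈ Set.range τ then (𝒯 τ).toReal *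
      (⨆ v : W, ⨆ w : W, hsDiv ε (Measure.map (fun x => F (SAMP τ x)) (fixEntry μbar j v))
        (Measure.map (fun x => F (SAMP τ x)) (fixEntry μbar j w))) else 0) /
  (∑ τ : Fin m → Fin n, if j ∈ Set.range τ then (𝒯 τ).toReal else 0)

open Classical in
/-- Uniform distribution on injective templates (sampling without replacement). -/
def uniformInj (n m : ℕ) : (Fin m → Fin n) → ℝ≥0∞ :=
  fun τ => if Function.Injective τ then
    ((Finset.univ.filter (fun σ : Fin m → Fin n => Function.Injective σ)).card : ℝ≥0∞)⁻¹ else 0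

open Classical in
/-- Conditioning of a distribution on templates to an event. -/
def condDist {n m : ℕ} (𝒯 : (Fin m → Fin n) → ℝ≥0∞) (E : Set (Fin m → Fin n)) :
    (Fin m → Fin n) → ℝ≥0∞ :=
  fun τ => if τ ∈ E then 𝒯 τ / (∑ σ : Fin m → Fin n, if σ ∈ E then 𝒯 σ else 0) else 0

/-- The increasing enumeration of a finite set of indices, as a sampling template. -/
def poissonTemplate {n : ℕ} (s : Finset (Fin n)) : Fin s.card → Fin n :=
  fun i => (s.orderIsoOfFin rfl i : Fin n)

/-- Statistical privacy curve of a query. -/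
def Phi {W A : Type*} [MeasurableSpace W] [MeasurableSpace A] {k : ℕ}
    (μbar : Fin k → Measure W) (F : (Fin k → W) → A) (ε : ℝ) : ℝ :=
  ⨆ j : Fin k, ⨆ v : W, ⨆ w : W,
    hsDiv ε (Measure.map F (fixEntry μbar j v)) (Measure.map F (fixEntry μbar j w))

/-- trade-off function -/
def tradeOff {A : Type*} [MeasurableSpace A] (P Q : Measure A) (α : ℝ) : ℝ :=
  sInf { y | ∃ S : Set A, MeasurableSet S ∧ (P Sᶜ).toReal ≤ α ∧ y = (Q S).toReal }

/-- total variation distance -/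
def tvDist {A : Type*} [MeasurableSpace A] (μ ν : Measure A) : ℝ :=
  ⨆ S : {S : Set A // MeasurableSet S}, |(μ S.1).toReal - (ν S.1).toReal|

/-- support of a measure -/
def msupport {X : Type*} [TopologicalSpace X] [MeasurableSpace X] (μ : Measure X) : Set X :=
  {x | ∀ U : Set X, IsOpen U → x ∈ U → 0 < μ U}

/-- τ ≈_j σ -/
def ApproxAt {n m : ℕ} (j : Fin n) (τ σ : Fin m → Fin n) : Prop :=
  ∀ i, (τ i ≠ j → σ i = τ i) ∧ (τ i = j → σ i ≠ j)

/-- F-samplable -/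
def FSamplable {W : Type*} [MeasurableSpace W] {n m : ℕ}
    (μbar : Fin n → Measure W) (F : (Fin m → W) → ℝ) : Prop :=
  ∀ (τ σ : Fin m → Fin n) (j : Fin n) (v w : W) (ε : ℝ), 0 ≤ ε →
    ∃ S : Set ℝ, ((∃ a, S = Set.Iic a) ∨ (∃ a, S = Set.Ici a) ∨ S = ∅) ∧
      ((Measure.map (fun x => F (SAMP τ x)) (fixEntry μbar j v)) S).toReal -
        Real.exp ε * ((Measure.map (fun x => F (SAMP σ x)) (fixEntry μbar j w)) S).toReal =
      hsDiv ε (Measure.map (fun x => F (SAMP τ x)) (fixEntry μbar j v))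
        (Measure.map (fun x => F (SAMP σ x)) (fixEntry μbar j w))


section Aux

variable {W A : Type*} [MeasurableSpace W] [MeasurableSpace A]

instance nonempty_measurable_subtype : Nonempty {S : Set A // MeasurableSet S} :=
  ⟨⟨∅, MeasurableSet.empty⟩⟩

lemma measurable_SAMP {n m : ℕ} (τ : Fin m → Fin n) : Measurable (SAMP (W := W) τ) :=
  measurable_pi_lambda _ fun i => measurable_pi_apply (τ i)

lemma toReal_le_one' {μ : Measure A} [IsProbabilityMeasure μ] (S : Set A) : (μ S).toReal ≤ 1 :=
  ENNReal.toReal_le_of_le_ofReal zero_le_one (by simpa using prob_le_one (μ := μ) (s := S))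

lemma hsDiv_bddAbove (ε : ℝ) (μ ν : Measure A) [IsProbabilityMeasure μ] :
    BddAbove (Set.range fun S : {S : Set A // MeasurableSet S} =>
      (μ S.1).toReal - Real.exp ε * (ν S.1).toReal) := by
  refine ⟨1, ?_⟩
  rintro x ⟨S, rfl⟩
  have h1 : 0 ≤ Real.exp ε * (ν S.1).toReal :=
    mul_nonneg (Real.exp_pos ε).le ENNReal.toReal_nonneg
  have h2 := toReal_le_one' (μ := μ) S.1
  dsimp only
  linarith

lemma apply_le_hsDiv (ε : ℝ) (μ ν : Measure A) [IsProbabilityMeasure μ] {S : Set A}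
    (hS : MeasurableSet S) : (μ S).toReal - Real.exp ε * (ν S).toReal ≤ hsDiv ε μ ν :=
  le_ciSup (hsDiv_bddAbove ε μ ν) (⟨S, hS⟩ : {S : Set A // MeasurableSet S})

lemma hsDiv_le_one (ε : ℝ) (μ ν : Measure A) [IsProbabilityMeasure μ] : hsDiv ε μ ν ≤ 1 := by
  refine ciSup_le fun S => ?_
  have h1 : 0 ≤ Real.exp ε * (ν S.1).toReal :=
    mul_nonneg (Real.exp_pos ε).le ENNReal.toReal_nonneg
  have h2 := toReal_le_one' (μ := μ) S.1
  linarith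

lemma update_prob (ν : Measure W) [IsProbabilityMeasure ν] {k : ℕ} (j : Fin k) (v : W)
    (i : Fin k) :
    IsProbabilityMeasure (Function.update (fun _ : Fin k => ν) j (Measure.dirac v) i) := by
  rcases eq_or_ne i j with rfl | h
  · rw [Function.update_self]; infer_instance
  · rw [Function.update_of_ne h]; infer_instance

lemma fixEntry_prob (ν : Measure W) [IsProbabilityMeasure ν] {k : ℕ} (j : Fin k) (v : W) :
    IsProbabilityMeasure (fixEntry (fun _ : Fin k => ν) j v) := by
  haveI := update_prob ν j v
  unfold fixEntry
  infer_instance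

lemma map_SAMP_pi {n m : ℕ} (μ : Fin n → Measure W) [∀ i, IsProbabilityMeasure (μ i)]
    {τ : Fin m → Fin n} (hτ : Function.Injective τ) :
    Measure.map (SAMP τ) (Measure.pi μ) = Measure.pi fun i => μ (τ i) := by
  classical
  refine (Measure.pi_eq fun S hS => ?_).symm
  rw [Measure.map_apply (measurable_SAMP τ) (MeasurableSet.univ_pi hS)]
  have hpre : SAMP (W := W) τ ⁻¹' Set.pi Set.univ S
      = Set.pi Set.univ (fun k => ⋂ (i : Fin m) (_ : τ i = k), S i) := by
    ext x
    simp only [Set.mem_preimage, Set.mem_pi, Set.mem_univ, forall_true_left, Set.mem_iInter, SAMP]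
    constructor
    · rintro h k i rfl; exact h i
    · intro h i; exact h (τ i) i rfl
  rw [hpre, Measure.pi_pi]
  have h1 : ∀ k ∈ Finset.univ, k ∉ Finset.image τ Finset.univ →
      μ k (⋂ (i : Fin m) (_ : τ i = k), S i) = 1 := by
    intro k _ hk
    have h2 : (⋂ (i : Fin m) (_ : τ i = k), S i) = Set.univ := by
      refine Set.iInter_eq_univ.2 fun i => ?_
      have : τ i ≠ k := fun h => hk (Finset.mem_image.2 ⟨i, Finset.mem_univ i, h⟩)
      simp [this]
    rw [h2]; exact measure_univ
  rw [← Finset.prod_subset (Finset.subset_univ (Finset.image τ Finset.univ)) h1]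
  rw [Finset.prod_image (fun i _ i' _ h => hτ h)]
  refine Finset.prod_congr rfl fun i _ => ?_
  congr 1
  ext x
  simp only [Set.mem_iInter]
  constructor
  · intro h; exact h i rfl
  · intro hx i' h; rw [hτ h]; exact hx

end Aux

section Aux2

variable {W A : Type*} [MeasurableSpace W] [MeasurableSpace A]

lemma measurable_insertNth {m : ℕ} (i0 : Fin (m + 1)) (u : W) :
    Measurable fun y : Fin m → W => (i0.insertNth u y : Fin (m + 1) → W) := by
  rw [measurable_pi_iff]
  intro k
  by_cases hk : k = i0
  · subst hk
    simpa only [Fin.insertNth_apply_same] using measurable_const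
  · obtain ⟨j, rfl⟩ := Fin.exists_succAbove_eq (Ne.symm (Ne.symm hk))
    simpa only [Fin.insertNth_apply_succAbove] using measurable_pi_apply j

lemma map_insertNth_pi (ν : Measure W) [IsProbabilityMeasure ν] {m : ℕ} (i0 : Fin (m + 1))
    (u : W) :
    Measure.map (fun y : Fin m → W => i0.insertNth u y) (Measure.pi fun _ : Fin m => ν)
      = fixEntry (fun _ : Fin (m + 1) => ν) i0 u := by
  classical
  haveI := update_prob ν i0 u
  unfold fixEntry
  refine (Measure.pi_eq fun S hS => ?_).symm
  rw [Measure.map_apply (measurable_insertNth i0 u) (MeasurableSet.univ_pi hS)]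
  have hpre : (fun y : Fin m → W => i0.insertNth u y) ⁻¹' Set.pi Set.univ S =
      if u ∈ S i0 then Set.pi Set.univ (fun j => S (i0.succAbove j)) else ∅ := by
    ext y
    by_cases hu : u ∈ S i0 <;>
      simp only [hu, if_true, if_false, Set.mem_preimage, Set.mem_pi, Set.mem_univ,
        forall_true_left, Set.mem_empty_iff_false] <;>
      rw [Fin.forall_iff_succAbove i0] <;>
      simp [hu, Fin.insertNth_apply_same, Fin.insertNth_apply_succAbove]
  rw [hpre, Fin.prod_univ_succAbove
    (fun k => Function.update (fun _ : Fin (m + 1) => ν) i0 (Measure.dirac u) k (S k)) i0]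
  rw [Function.update_self]
  have hrest : ∀ j : Fin m,
      Function.update (fun _ : Fin (m + 1) => ν) i0 (Measure.dirac u) (i0.succAbove j)
        (S (i0.succAbove j)) = ν (S (i0.succAbove j)) := fun j => by
    rw [Function.update_of_ne (Fin.succAbove_ne i0 j)]
  by_cases hu : u ∈ S i0
  · rw [if_pos hu, Measure.pi_pi]
    rw [Measure.dirac_apply' u (hS i0), Set.indicator_of_mem hu, Pi.one_apply, one_mul]
    exact Finset.prod_congr rfl fun j _ => (hrest j).symm
  · rw [if_neg hu, measure_empty]
    rw [Measure.dirac_apply' u (hS i0), Set.indicator_of_notMem hu, zero_mul]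

lemma mix_bound (ν : Measure W) [IsProbabilityMeasure ν] {m : ℕ} (i0 : Fin m)
    {T : Set (Fin m → W)} (hT : MeasurableSet T) {c r : ℝ≥0∞} (hc : c ≠ ⊤)
    (h : ∀ u : W, r ≤ c * fixEntry (fun _ : Fin m => ν) i0 u T) :
    r ≤ c * Measure.pi (fun _ : Fin m => ν) T := by
  rcases m with _ | m
  · exact i0.elim0
  set e := MeasurableEquiv.piFinSuccAbove (fun _ : Fin (m + 1) => W) i0 with he
  have hmp := measurePreserving_piFinSuccAbove (fun _ : Fin (m + 1) => (ν : Measure W)) i0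
  have hTpre : MeasurableSet (e.symm ⁻¹' T) := hT.preimage e.symm.measurable
  have hpi : Measure.pi (fun _ : Fin (m + 1) => ν) T
      = (ν.prod (Measure.pi fun _ : Fin m => ν)) (e.symm ⁻¹' T) := by
    rw [← hmp.map_eq, Measure.map_apply e.measurable hTpre]
    congr 1
    ext x
    simp
  have hslice : ∀ u : W, (Measure.pi fun _ : Fin m => ν) (Prod.mk u ⁻¹' (e.symm ⁻¹' T))
      = fixEntry (fun _ : Fin (m + 1) => ν) i0 u T := by
    intro u
    have h1 : Prod.mk u ⁻¹' (e.symm ⁻¹' T) = (fun y : Fin m → W => i0.insertNth u y) ⁻¹' T := by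
      ext y
      simp only [he, MeasurableEquiv.piFinSuccAbove, Set.mem_preimage,
        MeasurableEquiv.coe_mk, Equiv.symm_symm]
      exact Iff.rfl
    rw [h1, ← Measure.map_apply (measurable_insertNth i0 u) hT, map_insertNth_pi]
  calc r = ∫⁻ _, r ∂ν := by simp
    _ ≤ ∫⁻ u, c * fixEntry (fun _ : Fin (m + 1) => ν) i0 u T ∂ν := lintegral_mono fun u => h u
    _ = c * ∫⁻ u, fixEntry (fun _ : Fin (m + 1) => ν) i0 u T ∂ν :=
        lintegral_const_mul' c _ hc
    _ = c * Measure.pi (fun _ : Fin (m + 1) => ν) T := by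
        rw [hpi, Measure.prod_apply hTpre]
        congr 1
        exact lintegral_congr fun u => (hslice u).symm

lemma hsDiv_le_Phi {m : ℕ} (ν : Measure W) [IsProbabilityMeasure ν] (G : (Fin m → W) → A)
    (hG : Measurable G) (ε' : ℝ) (i0 : Fin m) (v w : W) :
    hsDiv ε' (Measure.map G (fixEntry (fun _ : Fin m => ν) i0 v))
        (Measure.map G (fixEntry (fun _ : Fin m => ν) i0 w))
      ≤ Phi (fun _ : Fin m => ν) G ε' := by
  haveI : Nonempty W := ⟨v⟩
  haveI : ∀ (j : Fin m) (u : W), IsProbabilityMeasure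
      (Measure.map G (fixEntry (fun _ : Fin m => ν) j u)) := fun j u => by
    haveI := fixEntry_prob ν j u
    exact Measure.isProbabilityMeasure_map hG.aemeasurable
  have hb1 : ∀ (j : Fin m) (v' : W), BddAbove (Set.range fun w' : W =>
      hsDiv ε' (Measure.map G (fixEntry (fun _ : Fin m => ν) j v'))
        (Measure.map G (fixEntry (fun _ : Fin m => ν) j w'))) := by
    intro j v'
    refine ⟨1, ?_⟩
    rintro x ⟨w', rfl⟩
    exact hsDiv_le_one _ _ _
  have hb2 : ∀ j : Fin m, BddAbove (Set.range fun v' : W => ⨆ w' : W,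
      hsDiv ε' (Measure.map G (fixEntry (fun _ : Fin m => ν) j v'))
        (Measure.map G (fixEntry (fun _ : Fin m => ν) j w'))) := by
    intro j
    refine ⟨1, ?_⟩
    rintro x ⟨v', rfl⟩
    exact ciSup_le fun w' => hsDiv_le_one _ _ _
  have hb3 : BddAbove (Set.range fun j : Fin m => ⨆ v' : W, ⨆ w' : W,
      hsDiv ε' (Measure.map G (fixEntry (fun _ : Fin m => ν) j v'))
        (Measure.map G (fixEntry (fun _ : Fin m => ν) j w'))) := by
    refine ⟨1, ?_⟩
    rintro x ⟨j, rfl⟩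
    exact ciSup_le fun v' => ciSup_le fun w' => hsDiv_le_one _ _ _
  calc hsDiv ε' (Measure.map G (fixEntry (fun _ : Fin m => ν) i0 v))
        (Measure.map G (fixEntry (fun _ : Fin m => ν) i0 w))
      ≤ ⨆ w' : W, hsDiv ε' (Measure.map G (fixEntry (fun _ : Fin m => ν) i0 v))
          (Measure.map G (fixEntry (fun _ : Fin m => ν) i0 w')) := le_ciSup (hb1 i0 v) w
    _ ≤ ⨆ v' : W, ⨆ w' : W, hsDiv ε' (Measure.map G (fixEntry (fun _ : Fin m => ν) i0 v'))
          (Measure.map G (fixEntry (fun _ : Fin m => ν) i0 w')) := le_ciSup (hb2 i0) v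
    _ ≤ Phi (fun _ : Fin m => ν) G ε' := le_ciSup hb3 i0

end Aux2

section Aux3

variable {W A : Type*} [MeasurableSpace W] [MeasurableSpace A]

lemma poissonTemplate_injective {n : ℕ} (s : Finset (Fin n)) :
    Function.Injective (poissonTemplate s) := fun a b h =>
  (s.orderIsoOfFin rfl).injective (Subtype.ext h)

lemma poissonTemplate_mem {n : ℕ} (s : Finset (Fin n)) (i : Fin s.card) :
    poissonTemplate s i ∈ s := (s.orderIsoOfFin rfl i).2

/-- Representation when `j ∉ s`: the mapped measure does not depend on the fixed entry. -/
lemma rep_not_mem {n : ℕ} (ν : Measure W) [IsProbabilityMeasure ν] (s : Finset (Fin n))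
    {j : Fin n} (hj : j ∉ s) (G : (Fin s.card → W) → A) (hG : Measurable G) (u : W) :
    Measure.map (fun x => G (SAMP (poissonTemplate s) x)) (fixEntry (fun _ : Fin n => ν) j u)
      = Measure.map G (Measure.pi fun _ : Fin s.card => ν) := by
  haveI := update_prob ν j u
  have h1 : (fun x => G (SAMP (poissonTemplate s) x)) = G ∘ SAMP (poissonTemplate s) := rfl
  rw [h1, ← Measure.map_map hG (measurable_SAMP _)]
  unfold fixEntry
  rw [map_SAMP_pi _ (poissonTemplate_injective s)]
  have h2 : (fun i => Function.update (fun _ : Fin n => ν) j (Measure.dirac u)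
      (poissonTemplate s i)) = fun _ : Fin s.card => ν := funext fun i =>
    Function.update_of_ne (fun h : poissonTemplate s i = j =>
      hj (h ▸ poissonTemplate_mem s i)) _ _
  rw [h2]

/-- Representation when `j ∈ s`. -/
lemma rep_mem {n : ℕ} (ν : Measure W) [IsProbabilityMeasure ν] (s : Finset (Fin n))
    {j : Fin n} (hj : j ∈ s) (G : (Fin s.card → W) → A) (hG : Measurable G) :
    ∃ i0 : Fin s.card, ∀ u : W,
      Measure.map (fun x => G (SAMP (poissonTemplate s) x)) (fixEntry (fun _ : Fin n => ν) j u)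
        = Measure.map G (fixEntry (fun _ : Fin s.card => ν) i0 u) := by
  refine ⟨(s.orderIsoOfFin rfl).symm ⟨j, hj⟩, fun u => ?_⟩
  haveI := update_prob ν j u
  have hτ : poissonTemplate s ((s.orderIsoOfFin rfl).symm ⟨j, hj⟩) = j := by
    unfold poissonTemplate
    rw [OrderIso.apply_symm_apply]
  have h1 : (fun x => G (SAMP (poissonTemplate s) x)) = G ∘ SAMP (poissonTemplate s) := rfl
  rw [h1, ← Measure.map_map hG (measurable_SAMP _)]
  unfold fixEntry
  rw [map_SAMP_pi _ (poissonTemplate_injective s)]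
  have h2 : (fun i => Function.update (fun _ : Fin n => ν) j (Measure.dirac u)
      (poissonTemplate s i))
      = Function.update (fun _ : Fin s.card => ν) ((s.orderIsoOfFin rfl).symm ⟨j, hj⟩)
        (Measure.dirac u) := by
    funext i
    rcases eq_or_ne i ((s.orderIsoOfFin rfl).symm ⟨j, hj⟩) with rfl | hi
    · rw [hτ, Function.update_self, Function.update_self]
    · have hne : poissonTemplate s i ≠ j := fun h =>
        hi (by rw [← hτ] at h; exact poissonTemplate_injective s h)
      rw [Function.update_of_ne hne, Function.update_of_ne hi]
  rw [h2]

lemma count_mem_card {n : ℕ} (j : Fin n) (m : ℕ) (hm : 1 ≤ m) [DecidableEq (Fin n)]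
    [DecidablePred fun s : Finset (Fin n) => j ∈ s ∧ s.card = m] :
    (Finset.univ.filter fun s : Finset (Fin n) => j ∈ s ∧ s.card = m).card
      = (n - 1).choose (m - 1) := by
  classical
  have h := Finset.card_bij'
    (i := fun (s : Finset (Fin n)) (_ : s ∈ Finset.univ.filter
        fun s : Finset (Fin n) => j ∈ s ∧ s.card = m) => s.erase j)
    (j := fun (t : Finset (Fin n)) (_ : t ∈ (Finset.univ.erase j).powersetCard (m - 1)) =>
      insert j t)
    (hi := ?_) (hj := ?_) (left_inv := ?_) (right_inv := ?_)
  · rw [h, Finset.card_powersetCard, Finset.card_erase_of_mem (Finset.mem_univ j),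
      Finset.card_univ, Fintype.card_fin]
  · intro s hs
    rw [Finset.mem_filter] at hs
    rw [Finset.mem_powersetCard]
    exact ⟨Finset.erase_subset_erase j (Finset.subset_univ s),
      by rw [Finset.card_erase_of_mem hs.2.1, hs.2.2]⟩
  · intro t ht
    rw [Finset.mem_powersetCard] at ht
    have hjt : j ∉ t := fun h => (Finset.mem_erase.mp (ht.1 h)).1 rfl
    rw [Finset.mem_filter]
    refine ⟨Finset.mem_univ _, Finset.mem_insert_self j t, ?_⟩
    rw [Finset.card_insert_of_notMem hjt, ht.2]
    omega
  · intro s hs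
    rw [Finset.mem_filter] at hs
    exact Finset.insert_erase hs.2.1
  · intro t ht
    rw [Finset.mem_powersetCard] at ht
    exact Finset.erase_insert fun h => (Finset.mem_erase.mp (ht.1 h)).1 rfl

lemma count_not_mem_card {n : ℕ} (j : Fin n) (m : ℕ)
    [DecidablePred fun s : Finset (Fin n) => j ∉ s ∧ s.card = m] :
    (Finset.univ.filter fun s : Finset (Fin n) => j ∉ s ∧ s.card = m).card
      = (n - 1).choose m := by
  classical
  have h : (Finset.univ.filter fun s : Finset (Fin n) => j ∉ s ∧ s.card = m)
      = (Finset.univ.erase j).powersetCard m := by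
    ext s
    rw [Finset.mem_filter, Finset.mem_powersetCard, Finset.subset_erase]
    constructor
    · rintro ⟨-, hjs, hc⟩; exact ⟨⟨Finset.subset_univ s, hjs⟩, hc⟩
    · rintro ⟨⟨-, hjs⟩, hc⟩; exact ⟨Finset.mem_univ s, hjs, hc⟩
  rw [h, Finset.card_powersetCard, Finset.card_erase_of_mem (Finset.mem_univ j),
    Finset.card_univ, Fintype.card_fin]

end Aux3

section Aux4

variable {W A : Type*} [MeasurableSpace W] [MeasurableSpace A]

lemma key_bound (ν : Measure W) [IsProbabilityMeasure ν] {m : ℕ} (i0 : Fin m)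
    (G : (Fin m → W) → A) (hG : Measurable G) {ε t : ℝ} (hε : 0 < ε) (ht : 1 ≤ t)
    {S : Set A} (hS : MeasurableSet S) (v w : W) :
    ((Measure.map G (fixEntry (fun _ : Fin m => ν) i0 v)) S).toReal
      - Real.exp ε * ((Measure.map G (fixEntry (fun _ : Fin m => ν) i0 w)) S).toReal
    ≤ Phi (fun _ : Fin m => ν) G (Real.log (1 + t * (Real.exp ε - 1)))
      + (t - 1) * (Real.exp ε - 1)
        * ((Measure.map G (Measure.pi fun _ : Fin m => ν)) S).toReal := by
  haveI : ∀ (j : Fin m) (u : W), IsProbabilityMeasure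
      (Measure.map G (fixEntry (fun _ : Fin m => ν) j u)) := fun j u => by
    haveI := fixEntry_prob ν j u
    exact Measure.isProbabilityMeasure_map hG.aemeasurable
  have hexp : 1 < Real.exp ε := by
    rw [← Real.exp_zero]; exact Real.exp_lt_exp.mpr hε
  set X : ℝ := 1 + t * (Real.exp ε - 1) with hXdef
  have hX0 : 0 < X := by nlinarith
  have hXe : Real.exp ε ≤ X := by nlinarith
  have hlog : Real.exp (Real.log X) = X := Real.exp_log hX0
  set D : ℝ := Phi (fun _ : Fin m => ν) G (Real.log X) with hDdef
  set x : ℝ := ((Measure.map G (fixEntry (fun _ : Fin m => ν) i0 v)) S).toReal with hxd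
  set y : ℝ := ((Measure.map G (fixEntry (fun _ : Fin m => ν) i0 w)) S).toReal with hyd
  set z : ℝ := ((Measure.map G (Measure.pi fun _ : Fin m => ν)) S).toReal with hzd
  have hfor : ∀ u : W, x - X * ((Measure.map G (fixEntry (fun _ : Fin m => ν) i0 u)) S).toReal
      ≤ D := by
    intro u
    have h1 := apply_le_hsDiv (Real.log X) (Measure.map G (fixEntry (fun _ : Fin m => ν) i0 v))
      (Measure.map G (fixEntry (fun _ : Fin m => ν) i0 u)) hS
    rw [hlog] at h1
    exact h1.trans (hsDiv_le_Phi ν G hG (Real.log X) i0 v u)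
  have hay : x - X * y ≤ D := hfor w
  have hz0 : 0 ≤ z := ENNReal.toReal_nonneg
  have haz : x - X * z ≤ D := by
    by_cases hxD : x - D ≤ 0
    · nlinarith
    · push_neg at hxD
      have hT : MeasurableSet (G ⁻¹' S) := hG hS
      have hmapz : (Measure.map G (Measure.pi fun _ : Fin m => ν)) S
          = (Measure.pi fun _ : Fin m => ν) (G ⁻¹' S) := Measure.map_apply hG hS
      have hmix : ENNReal.ofReal (x - D) ≤ ENNReal.ofReal X
          * (Measure.pi fun _ : Fin m => ν) (G ⁻¹' S) := by
        refine mix_bound ν i0 hT ENNReal.ofReal_ne_top fun u => ?_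
        have h1 := hfor u
        rw [Measure.map_apply hG hS] at h1
        calc ENNReal.ofReal (x - D)
            ≤ ENNReal.ofReal (X * ((fixEntry (fun _ : Fin m => ν) i0 u) (G ⁻¹' S)).toReal) :=
              ENNReal.ofReal_le_ofReal (by linarith)
          _ = ENNReal.ofReal X
              * ENNReal.ofReal (((fixEntry (fun _ : Fin m => ν) i0 u) (G ⁻¹' S)).toReal) :=
              ENNReal.ofReal_mul hX0.le
          _ = ENNReal.ofReal X * (fixEntry (fun _ : Fin m => ν) i0 u) (G ⁻¹' S) := by
              haveI := fixEntry_prob ν i0 u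
              rw [ENNReal.ofReal_toReal (measure_ne_top _ _)]
      have h2 := ENNReal.toReal_mono
        (ENNReal.mul_ne_top ENNReal.ofReal_ne_top (measure_ne_top _ _)) hmix
      rw [ENNReal.toReal_ofReal hxD.le, ENNReal.toReal_mul, ENNReal.toReal_ofReal hX0.le] at h2
      rw [hzd, hmapz]
      linarith
  set θ : ℝ := Real.exp ε / X with hθdef
  have hθ0 : 0 ≤ θ := div_nonneg (Real.exp_pos ε).le hX0.le
  have hθ1 : θ ≤ 1 := (div_le_one hX0).mpr hXe
  have hθX : θ * X = Real.exp ε := div_mul_cancel₀ _ hX0.ne'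
  have h3 : θ * (x - X * y) ≤ θ * D := mul_le_mul_of_nonneg_left hay hθ0
  have h4 : (1 - θ) * (x - X * z) ≤ (1 - θ) * D := mul_le_mul_of_nonneg_left haz (by linarith)
  have hexpand : θ * (x - X * y) + (1 - θ) * (x - X * z)
      = x - Real.exp ε * y - (X - Real.exp ε) * z := by rw [← hθX]; ring
  have hXe2 : X - Real.exp ε = (t - 1) * (Real.exp ε - 1) := by rw [hXdef]; ring
  nlinarith [h3, h4]

lemma real_id1 {n m : ℕ} (hm : 1 ≤ m) :
    (n : ℝ) * ((n - 1).choose (m - 1) : ℕ) = (n.choose m : ℕ) * m := by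
  obtain ⟨m', rfl⟩ : ∃ m', m = m' + 1 := ⟨m - 1, by omega⟩
  rcases n with _ | n'
  · simp
  · simp only [Nat.add_sub_cancel]
    exact_mod_cast Nat.add_one_mul_choose_eq n' m'

lemma real_id2 {n m : ℕ} (hm : 1 ≤ m) (hmn : m ≤ n) :
    ((n - 1).choose (m - 1) : ℕ) * ((n : ℝ) / (m : ℝ) - 1) = ((n - 1).choose m : ℕ) := by
  have hm0 : (0 : ℝ) < (m : ℝ) := by exact_mod_cast (by omega : 0 < m)
  obtain ⟨m', rfl⟩ : ∃ m', m = m' + 1 := ⟨m - 1, by omega⟩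
  have h := Nat.choose_succ_right_eq (n - 1) m'
  have hsub : n - 1 - m' = n - (m' + 1) := by omega
  rw [hsub] at h
  simp only [Nat.add_sub_cancel]
  have hdiv : (n : ℝ) / ((m' + 1 : ℕ) : ℝ) - 1 = ((n : ℝ) - ((m' + 1 : ℕ) : ℝ)) / ((m' + 1 : ℕ) : ℝ) := by
    field_simp
  rw [hdiv]
  rw [eq_comm, mul_div_assoc', eq_div_iff hm0.ne', ← Nat.cast_sub hmn]
  exact_mod_cast h
end Aux4

section Main

/-- The subsampled query output measure with entry `j` fixed to `u`. -/
def Pmeas {W A : Type*} [MeasurableSpace W] [MeasurableSpace A] {n : ℕ} (ν : Measure W)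
    (F : ∀ m : ℕ, (Fin m → W) → A) (j : Fin n) (u : W) (s : Finset (Fin n)) : Measure A :=
  Measure.map (fun x => F s.card (SAMP (poissonTemplate s) x)) (fixEntry (fun _ : Fin n => ν) j u)

/-- The query output measure on an i.i.d. database of size `m`. -/
def Qmeas {W A : Type*} [MeasurableSpace W] [MeasurableSpace A] (ν : Measure W)
    (F : ∀ m : ℕ, (Fin m → W) → A) (m : ℕ) : Measure A :=
  Measure.map (F m) (Measure.pi fun _ : Fin m => ν)

lemma main_core {W A : Type*} [MeasurableSpace W] [MeasurableSpace A] {n : ℕ}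
    (ν : Measure W) [IsProbabilityMeasure ν] (F : ∀ m : ℕ, (Fin m → W) → A)
    (hF : ∀ m, Measurable (F m)) {l : ℝ} (hl0 : 0 ≤ l) (hl1 : l ≤ 1) {ε : ℝ} (hε : 0 < ε)
    (j : Fin n) (v w : W) {S : Set A} (hS : MeasurableSet S) :
    ∑ s : Finset (Fin n), (l ^ s.card * (1 - l) ^ (n - s.card)) *
        ((Pmeas ν F j v s S).toReal - Real.exp ε * (Pmeas ν F j w s S).toReal)
      ≤ ∑ m ∈ Finset.Icc 1 n, (n.choose m : ℝ) * l ^ m * (1 - l) ^ (n - m) *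
          ((m : ℝ) / (n : ℝ)) *
          Phi (fun _ : Fin m => ν) (F m)
            (Real.log (1 + ((n : ℝ) / (m : ℝ)) * (Real.exp ε - 1))) := by
  classical
  have hn : 0 < n := j.pos
  have hexp : 1 < Real.exp ε := by rw [← Real.exp_zero]; exact Real.exp_lt_exp.mpr hε
  have hc : ∀ s : Finset (Fin n), 0 ≤ l ^ s.card * (1 - l) ^ (n - s.card) :=
    fun s => mul_nonneg (pow_nonneg hl0 _) (pow_nonneg (by linarith) _)
  have hcm : ∀ m : ℕ, 0 ≤ l ^ m * (1 - l) ^ (n - m) :=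
    fun m => mul_nonneg (pow_nonneg hl0 _) (pow_nonneg (by linarith) _)
  have hz : ∀ m : ℕ, 0 ≤ (Qmeas ν F m S).toReal := fun m => ENNReal.toReal_nonneg
  have hmaps1 : ∀ s ∈ Finset.univ.filter (fun s : Finset (Fin n) => j ∈ s),
      s.card ∈ Finset.Icc 1 n := by
    intro s hs
    have hj' : j ∈ s := (Finset.mem_filter.mp hs).2
    exact Finset.mem_Icc.mpr ⟨Finset.card_pos.mpr ⟨j, hj'⟩, by simpa using Finset.card_le_univ s⟩
  have hmaps2 : ∀ s ∈ Finset.univ.filter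
      (fun s : Finset (Fin n) => j ∉ s ∧ 1 ≤ s.card), s.card ∈ Finset.Icc 1 n := by
    intro s hs
    have h' := (Finset.mem_filter.mp hs).2
    exact Finset.mem_Icc.mpr ⟨h'.2, by simpa using Finset.card_le_univ s⟩
  have hfib1 : ∀ f : ℕ → ℝ,
      (∑ s ∈ Finset.univ.filter (fun s : Finset (Fin n) => j ∈ s), f s.card)
        = ∑ m ∈ Finset.Icc 1 n, ((n - 1).choose (m - 1) : ℕ) * f m := by
    intro f
    rw [← Finset.sum_fiberwise_of_maps_to hmaps1 (fun s => f s.card)]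
    refine Finset.sum_congr rfl fun m hm => ?_
    have hm1 := (Finset.mem_Icc.mp hm).1
    rw [Finset.filter_filter]
    calc (∑ s ∈ Finset.univ.filter (fun s : Finset (Fin n) => j ∈ s ∧ s.card = m), f s.card)
        = ∑ s ∈ Finset.univ.filter (fun s : Finset (Fin n) => j ∈ s ∧ s.card = m), f m :=
          Finset.sum_congr rfl fun s hs => by rw [(Finset.mem_filter.mp hs).2.2]
      _ = _ := by rw [Finset.sum_const, count_mem_card j m hm1, nsmul_eq_mul]
  have hfib2 : ∀ f : ℕ → ℝ,
      (∑ s ∈ Finset.univ.filter (fun s : Finset (Fin n) => j ∉ s ∧ 1 ≤ s.card), f s.card)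
        = ∑ m ∈ Finset.Icc 1 n, ((n - 1).choose m : ℕ) * f m := by
    intro f
    rw [← Finset.sum_fiberwise_of_maps_to hmaps2 (fun s => f s.card)]
    refine Finset.sum_congr rfl fun m hm => ?_
    obtain ⟨hm1, hmn⟩ := Finset.mem_Icc.mp hm
    rw [Finset.filter_filter]
    have hset : Finset.univ.filter (fun s : Finset (Fin n) => (j ∉ s ∧ 1 ≤ s.card) ∧ s.card = m)
        = Finset.univ.filter (fun s : Finset (Fin n) => j ∉ s ∧ s.card = m) := by
      ext s
      simp only [Finset.mem_filter, Finset.mem_univ, true_and]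
      constructor
      · rintro ⟨⟨h1, _⟩, h3⟩; exact ⟨h1, h3⟩
      · rintro ⟨h1, h3⟩; exact ⟨⟨h1, by omega⟩, h3⟩
    rw [hset]
    calc (∑ s ∈ Finset.univ.filter (fun s : Finset (Fin n) => j ∉ s ∧ s.card = m), f s.card)
        = ∑ s ∈ Finset.univ.filter (fun s : Finset (Fin n) => j ∉ s ∧ s.card = m), f m :=
          Finset.sum_congr rfl fun s hs => by rw [(Finset.mem_filter.mp hs).2.2]
      _ = _ := by rw [Finset.sum_const, count_not_mem_card j m, nsmul_eq_mul]
  -- split the sum according to whether `j ∈ s`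
  rw [← Finset.sum_filter_add_sum_filter_not Finset.univ (fun s : Finset (Fin n) => j ∈ s)]
  -- the terms with `j ∉ s`
  have hC : (∑ s ∈ Finset.univ.filter (fun s : Finset (Fin n) => ¬ j ∈ s),
      (l ^ s.card * (1 - l) ^ (n - s.card)) *
        ((Pmeas ν F j v s S).toReal - Real.exp ε * (Pmeas ν F j w s S).toReal))
      = - ∑ s ∈ Finset.univ.filter (fun s : Finset (Fin n) => ¬ j ∈ s),
          (l ^ s.card * (1 - l) ^ (n - s.card)) *
            ((Real.exp ε - 1) * (Qmeas ν F s.card S).toReal) := by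
    rw [← Finset.sum_neg_distrib]
    refine Finset.sum_congr rfl fun s hs => ?_
    have hj' : j ∉ s := (Finset.mem_filter.mp hs).2
    have h1 : Pmeas ν F j v s = Qmeas ν F s.card := rep_not_mem ν s hj' _ (hF _) v
    have h2 : Pmeas ν F j w s = Qmeas ν F s.card := rep_not_mem ν s hj' _ (hF _) w
    rw [h1, h2]; ring
  -- the terms with `j ∈ s`
  have hD : ∀ s ∈ Finset.univ.filter (fun s : Finset (Fin n) => j ∈ s),
      (l ^ s.card * (1 - l) ^ (n - s.card)) *
        ((Pmeas ν F j v s S).toReal - Real.exp ε * (Pmeas ν F j w s S).toReal)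
      ≤ (l ^ s.card * (1 - l) ^ (n - s.card)) *
          (Phi (fun _ : Fin s.card => ν) (F s.card)
            (Real.log (1 + ((n : ℝ) / (s.card : ℝ)) * (Real.exp ε - 1)))
          + ((n : ℝ) / (s.card : ℝ) - 1) * (Real.exp ε - 1) * (Qmeas ν F s.card S).toReal) := by
    intro s hs
    have hj' : j ∈ s := (Finset.mem_filter.mp hs).2
    obtain ⟨i0, hrep⟩ := rep_mem ν s hj' (F s.card) (hF _)
    have hm1 : 0 < s.card := Finset.card_pos.mpr ⟨j, hj'⟩
    have hmn : s.card ≤ n := by simpa using Finset.card_le_univ s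
    have ht : 1 ≤ (n : ℝ) / (s.card : ℝ) := by
      rw [le_div_iff₀ (by exact_mod_cast hm1)]
      simpa using (by exact_mod_cast hmn : (s.card : ℝ) ≤ (n : ℝ))
    have hkb := key_bound ν i0 (F s.card) (hF _) hε ht hS v w
    have h1 : Pmeas ν F j v s = Measure.map (F s.card)
        (fixEntry (fun _ : Fin s.card => ν) i0 v) := hrep v
    have h2 : Pmeas ν F j w s = Measure.map (F s.card)
        (fixEntry (fun _ : Fin s.card => ν) i0 w) := hrep w
    rw [h1, h2]
    exact mul_le_mul_of_nonneg_left hkb (hc s)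
  rw [hC]
  have hA1 : (∑ s ∈ Finset.univ.filter (fun s : Finset (Fin n) => j ∈ s),
      (l ^ s.card * (1 - l) ^ (n - s.card)) *
        ((Pmeas ν F j v s S).toReal - Real.exp ε * (Pmeas ν F j w s S).toReal))
      ≤ ∑ m ∈ Finset.Icc 1 n, ((n - 1).choose (m - 1) : ℕ) *
          ((l ^ m * (1 - l) ^ (n - m)) *
            (Phi (fun _ : Fin m => ν) (F m)
              (Real.log (1 + ((n : ℝ) / (m : ℝ)) * (Real.exp ε - 1)))
            + ((n : ℝ) / (m : ℝ) - 1) * (Real.exp ε - 1) * (Qmeas ν F m S).toReal)) :=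
    (Finset.sum_le_sum hD).trans (le_of_eq (hfib1 fun m =>
      (l ^ m * (1 - l) ^ (n - m)) *
        (Phi (fun _ : Fin m => ν) (F m)
          (Real.log (1 + ((n : ℝ) / (m : ℝ)) * (Real.exp ε - 1)))
        + ((n : ℝ) / (m : ℝ) - 1) * (Real.exp ε - 1) * (Qmeas ν F m S).toReal)))
  have hBsum : (∑ m ∈ Finset.Icc 1 n, ((n - 1).choose (m - 1) : ℕ) *
      ((l ^ m * (1 - l) ^ (n - m)) *
        (Phi (fun _ : Fin m => ν) (F m)
          (Real.log (1 + ((n : ℝ) / (m : ℝ)) * (Real.exp ε - 1)))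
        + ((n : ℝ) / (m : ℝ) - 1) * (Real.exp ε - 1) * (Qmeas ν F m S).toReal)))
      = (∑ m ∈ Finset.Icc 1 n, ((n - 1).choose (m - 1) : ℕ) *
          ((l ^ m * (1 - l) ^ (n - m)) *
            Phi (fun _ : Fin m => ν) (F m)
              (Real.log (1 + ((n : ℝ) / (m : ℝ)) * (Real.exp ε - 1)))))
        + ∑ m ∈ Finset.Icc 1 n, ((n - 1).choose m : ℕ) *
            ((l ^ m * (1 - l) ^ (n - m)) * ((Real.exp ε - 1) * (Qmeas ν F m S).toReal)) := by
    rw [← Finset.sum_add_distrib]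
    refine Finset.sum_congr rfl fun m hm => ?_
    obtain ⟨hm1, hmn⟩ := Finset.mem_Icc.mp hm
    rw [← real_id2 hm1 hmn]
    ring
  have hB1 : (∑ m ∈ Finset.Icc 1 n, ((n - 1).choose (m - 1) : ℕ) *
      ((l ^ m * (1 - l) ^ (n - m)) *
        Phi (fun _ : Fin m => ν) (F m)
          (Real.log (1 + ((n : ℝ) / (m : ℝ)) * (Real.exp ε - 1)))))
      = ∑ m ∈ Finset.Icc 1 n, (n.choose m : ℝ) * l ^ m * (1 - l) ^ (n - m) *
          ((m : ℝ) / (n : ℝ)) *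
          Phi (fun _ : Fin m => ν) (F m)
            (Real.log (1 + ((n : ℝ) / (m : ℝ)) * (Real.exp ε - 1))) := by
    refine Finset.sum_congr rfl fun m hm => ?_
    obtain ⟨hm1, hmn⟩ := Finset.mem_Icc.mp hm
    have hid := real_id1 (n := n) hm1
    have hn0 : (n : ℝ) ≠ 0 := Nat.cast_ne_zero.mpr hn.ne'
    have hCeq : (((n - 1).choose (m - 1) : ℕ) : ℝ) = (n.choose m : ℝ) * m / n := by
      rw [eq_div_iff hn0]; linarith [hid]
    rw [hCeq]; ring
  have hB3 : (∑ m ∈ Finset.Icc 1 n, ((n - 1).choose m : ℕ) *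
      ((l ^ m * (1 - l) ^ (n - m)) * ((Real.exp ε - 1) * (Qmeas ν F m S).toReal)))
      ≤ ∑ s ∈ Finset.univ.filter (fun s : Finset (Fin n) => ¬ j ∈ s),
          (l ^ s.card * (1 - l) ^ (n - s.card)) *
            ((Real.exp ε - 1) * (Qmeas ν F s.card S).toReal) := by
    rw [← hfib2 (fun m => (l ^ m * (1 - l) ^ (n - m)) *
      ((Real.exp ε - 1) * (Qmeas ν F m S).toReal))]
    refine Finset.sum_le_sum_of_subset_of_nonneg ?_ ?_
    · intro s hs
      simp only [Finset.mem_filter, Finset.mem_univ, true_and] at hs ⊢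
      exact hs.1
    · intro s _ _
      exact mul_nonneg (hcm _) (mul_nonneg (by linarith) (hz _))
  linarith [hA1, hBsum, hB1, hB3]

end Main
/-- Poisson sampling for i.i.d. databases, bound via the statistical
privacy curves of the smaller databases. -/
theorem poisson_sampling_SP_iid
    {W A : Type*} [MeasurableSpace W] [MeasurableSpace A] {n : ℕ} (hn : 0 < n)
    (nu0 : Measure W) [IsProbabilityMeasure nu0]
    (F : ∀ m : ℕ, (Fin m → W) → A) (hF : ∀ m, Measurable (F m))
    (l : ℝ) (hl : l ∈ Set.Icc (0 : ℝ) 1)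
    (ε : ℝ) (hε : 0 < ε) (j : Fin n) (v w : W) :
    hsDiv ε
      (Measure.sum fun s : Finset (Fin n) =>
        ENNReal.ofReal (l ^ s.card * (1 - l) ^ (n - s.card)) •
          Measure.map (fun x => F s.card (SAMP (poissonTemplate s) x))
            (fixEntry (fun _ : Fin n => nu0) j v))
      (Measure.sum fun s : Finset (Fin n) =>
        ENNReal.ofReal (l ^ s.card * (1 - l) ^ (n - s.card)) •
          Measure.map (fun x => F s.card (SAMP (poissonTemplate s) x))
            (fixEntry (fun _ : Fin n => nu0) j w))
      ≤ ∑ m ∈ Finset.Icc 1 n, (n.choose m : ℝ) * l ^ m * (1 - l) ^ (n - m) *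
          ((m : ℝ) / (n : ℝ)) *
          Phi (fun _ : Fin m => nu0) (F m)
            (Real.log (1 + ((n : ℝ) / (m : ℝ)) * (Real.exp ε - 1))) := by


  refine ciSup_le fun Sp => ?_
  obtain ⟨S, hS⟩ := Sp
  have hsum : ∀ u : W,
      ((Measure.sum fun s : Finset (Fin n) =>
        ENNReal.ofReal (l ^ s.card * (1 - l) ^ (n - s.card)) •
          Measure.map (fun x => F s.card (SAMP (poissonTemplate s) x))
            (fixEntry (fun _ : Fin n => nu0) j u)) S).toReal
      = ∑ s : Finset (Fin n), (l ^ s.card * (1 - l) ^ (n - s.card)) *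
          (Pmeas nu0 F j u s S).toReal := by
    intro u
    haveI : ∀ s : Finset (Fin n), IsProbabilityMeasure
        (Measure.map (fun x => F s.card (SAMP (poissonTemplate s) x))
          (fixEntry (fun _ : Fin n => nu0) j u)) := fun s => by
      haveI := fixEntry_prob nu0 j u
      exact Measure.isProbabilityMeasure_map (((hF _).comp (measurable_SAMP _)).aemeasurable)
    have hcs : ∀ s : Finset (Fin n), 0 ≤ l ^ s.card * (1 - l) ^ (n - s.card) :=
      fun s => mul_nonneg (pow_nonneg hl.1 _) (pow_nonneg (by linarith [hl.2]) _)
    rw [Measure.sum_apply _ hS, tsum_fintype]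
    simp only [Measure.smul_apply, smul_eq_mul]
    rw [ENNReal.toReal_sum (fun s _ =>
      ENNReal.mul_ne_top ENNReal.ofReal_ne_top (measure_ne_top _ _))]
    refine Finset.sum_congr rfl fun s _ => ?_
    rw [ENNReal.toReal_mul, ENNReal.toReal_ofReal (hcs s)]
    rfl
  rw [hsum v, hsum w, Finset.mul_sum, ← Finset.sum_sub_distrib]
  have hmain := main_core nu0 F hF hl.1 hl.2 hε j v w hS
  refine le_trans (le_of_eq ?_) hmain
  exact Finset.sum_congr rfl fun s _ => by ring

end
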